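/- arXiv:1302.4164 — 3 statements merged into one kernel-verified Lean document; each statement's English description precedes it below -/
import Mathlib

section
/- Let μ be a finite measure on a measurable space X, let s with 1 < s ≤ 2, and let Q_1 ⊇ Q_2 ⊇ ... be any finite family of measurable sets ordered by inclusion with nonnegative weights α_k attached and μ(Q_k) > 0. Then ∫_X (∑_k (α_k/μ(Q_k)) 1_{Q_k})^s dμ ≤ s · ∑_k α_k · ( (1/μ(Q_k)) ∑_{Q_j ⊆ Q_k} α_j )^{s-1}, where the inner sum ranges over indices j with Q_j ⊆ Q_k. -/
/-! Write `b_k = c_k 1_{Q_k}` with `c_k = α_k / μ(Q_k)`. Convexity of `t ↦ t ^ s` gives pointwise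
`(∑ b_k) ^ s ≤ s ∑_k b_k (∑_{l ≥ k} b_l) ^ (s - 1)`. After integration the `k`-th term is
`s c_k ∫_{Q_k} g_k ^ (s - 1)` with `g_k = ∑_{l ≥ k} c_l 1_{Q_l}`; as `0 ≤ s - 1 ≤ 1`, Jensen's
inequality bounds it by `μ(Q_k)` times the `(s - 1)`-th power of the average of `g_k` over `Q_k`,
and since the sets are nested this average is `μ(Q_k)⁻¹ ∑_{l ≥ k} α_l`. -/

open MeasureTheory Finset

lemma Real.rpow_sub_rpow_le_mul_sub_mul_rpow_sub_one {s x y : ℝ} (hs : 1 ≤ s) (hy : 0 ≤ y)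
    (hyx : y ≤ x) : x ^ s - y ^ s ≤ s * (x - y) * x ^ (s - 1) := by
  rcases hyx.eq_or_lt' with rfl | hx
  · simp
  have hx0 : 0 < x := hy.trans_lt hx
  have bernoulli := one_add_mul_self_le_rpow_one_add
    (by linarith [div_nonneg hy hx0.le] : -1 ≤ y / x - 1) hs
  rw [add_sub_cancel, Real.div_rpow hy hx0.le, le_div_iff₀ (by positivity)] at bernoulli
  have hxs : x ^ s = x * x ^ (s - 1) := by
    rw [← Real.rpow_one_add' hx0.le (by linarith)]; ring_nf
  have : s * (y / x - 1) * x ^ s = s * (y - x) * x ^ (s - 1) := by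
    rw [hxs]; field_simp
  linarith

lemma Finset.rpow_sum_le_mul_sum_mul_rpow_sum_filter_le {ι : Type*} [LinearOrder ι] {s : ℝ}
    (hs : 1 ≤ s) {b : ι → ℝ} (hb : ∀ i, 0 ≤ b i) (F : Finset ι) :
    (∑ i ∈ F, b i) ^ s ≤ s * ∑ i ∈ F, b i * (∑ j ∈ F with i ≤ j, b j) ^ (s - 1) := by
  induction F using Finset.induction_on_min with
  | empty => simp [Real.zero_rpow (by linarith : s ≠ 0)]
  | insert a F hmin ih =>
    have haF : a ∉ F := fun h => lt_irrefl a (hmin a h)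
    have hF : 0 ≤ ∑ i ∈ F, b i := sum_nonneg fun i _ => hb i
    have head : (insert a F).filter (a ≤ ·) = insert a F :=
      filter_true_of_mem fun i hi => (mem_insert.mp hi).elim ge_of_eq fun h => (hmin i h).le
    have tail : ∑ i ∈ F, b i * (∑ j ∈ insert a F with i ≤ j, b j) ^ (s - 1) =
        ∑ i ∈ F, b i * (∑ j ∈ F with i ≤ j, b j) ^ (s - 1) :=
      sum_congr rfl fun i hi => by rw [filter_insert, if_neg (not_le.mpr (hmin i hi))]
    have step := Real.rpow_sub_rpow_le_mul_sub_mul_rpow_sub_one hs hF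
      (le_add_of_nonneg_left (hb a))
    rw [add_sub_cancel_right] at step
    rw [sum_insert haF, sum_insert haF, head, tail, sum_insert haF]
    linarith

lemma Real.rpow_le_add_one {p t : ℝ} (ht : 0 ≤ t) (hp0 : 0 ≤ p) (hp1 : p ≤ 1) : t ^ p ≤ t + 1 := by
  rcases le_total t 1 with h | h
  · linarith [Real.rpow_le_one ht h hp0]
  · calc t ^ p ≤ t ^ (1 : ℝ) := Real.rpow_le_rpow_of_exponent_le h hp1
      _ ≤ t + 1 := by rw [Real.rpow_one]; linarith

section Jensen

variable {X : Type*} [MeasurableSpace X] {ν : Measure X} [IsFiniteMeasure ν] {g : X → ℝ} {p : ℝ}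

lemma MeasureTheory.Integrable.rpow_const_of_le_one (hg : Integrable g ν) (hg0 : 0 ≤ g)
    (hp0 : 0 ≤ p) (hp1 : p ≤ 1) : Integrable (fun x => g x ^ p) ν :=
  (hg.add (integrable_const 1)).mono' (hg.aemeasurable.pow_const p).aestronglyMeasurable
    (ae_of_all _ fun x => by
      rw [Real.norm_of_nonneg (Real.rpow_nonneg (hg0 x) p)]
      exact Real.rpow_le_add_one (hg0 x) hp0 hp1)

lemma integral_rpow_le_measureReal_mul_rpow_average (hg : Integrable g ν) (hg0 : 0 ≤ g)
    (hp0 : 0 ≤ p) (hp1 : p ≤ 1) : ∫ x, g x ^ p ∂ν ≤ ν.real Set.univ * (⨍ x, g x ∂ν) ^ p := by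
  rcases eq_zero_or_neZero ν with rfl | _
  · simp
  have jensen := (Real.concaveOn_rpow hp0 hp1).le_map_average
    (Real.continuous_rpow_const hp0).continuousOn isClosed_Ici (ae_of_all _ hg0) hg
    (hg.rpow_const_of_le_one hg0 hp0 hp1)
  rwa [average_eq, smul_eq_mul, inv_mul_le_iff₀ measureReal_univ_pos] at jensen

end Jensen

section Nested

variable {X ι : Type*} [MeasurableSpace X] {μ : Measure X} [IsFiniteMeasure μ] {Q : ι → Set X}

lemma integrable_const_mul_indicator_one {t : Set X} (ht : MeasurableSet t) (c : ℝ) :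
    Integrable (fun x => c * t.indicator 1 x) μ :=
  ((integrable_const 1).indicator ht).const_mul c

lemma setIntegral_sum_mul_indicator_one_of_subset (hQ : ∀ k, MeasurableSet (Q k)) {t : Set X}
    {F : Finset ι} (hFt : ∀ l ∈ F, Q l ⊆ t) (c : ι → ℝ) :
    ∫ x in t, ∑ l ∈ F, c l * (Q l).indicator 1 x ∂μ = ∑ l ∈ F, c l * μ.real (Q l) := by
  rw [integral_finsetSum _ fun l _ => integrable_const_mul_indicator_one (hQ l) (c l)]
  refine sum_congr rfl fun l hl => ?_
  rw [integral_const_mul, integral_indicator_one (hQ l), measureReal_restrict_apply (hQ l),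
    Set.inter_eq_left.mpr (hFt l hl)]

variable [Fintype ι] [LinearOrder ι]

theorem Antitone.integral_rpow_sum_mul_indicator_one_le (hQa : Antitone Q)
    (hQ : ∀ k, MeasurableSet (Q k)) {c : ι → ℝ} (hc : ∀ k, 0 ≤ c k) {s : ℝ}
    (hs1 : 1 ≤ s) (hs2 : s ≤ 2) :
    ∫ x, (∑ k, c k * (Q k).indicator 1 x) ^ s ∂μ ≤
      s * ∑ k, c k * μ.real (Q k) *
        ((μ.real (Q k))⁻¹ * ∑ l with k ≤ l, c l * μ.real (Q l)) ^ (s - 1) := by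
  set g : ι → X → ℝ := fun k x => ∑ l with k ≤ l, c l * (Q l).indicator 1 x
  have hb : ∀ k x, 0 ≤ c k * (Q k).indicator 1 x := fun k x =>
    mul_nonneg (hc k) (Set.indicator_nonneg (fun _ _ => zero_le_one) x)
  have hg0 : ∀ k, 0 ≤ g k := fun k x => sum_nonneg fun l _ => hb l x
  have hg : ∀ k, Integrable (g k) μ := fun k =>
    integrable_finsetSum _ fun l _ => integrable_const_mul_indicator_one (hQ l) (c l)
  have hgp : ∀ k, Integrable ((Q k).indicator fun x => g k x ^ (s - 1)) μ := fun k =>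
    (integrable_indicator_iff (hQ k)).mpr
      ((hg k).restrict.rpow_const_of_le_one (hg0 k) (by linarith) (by linarith))
  have pointwise : ∀ x, (∑ k, c k * (Q k).indicator 1 x) ^ s ≤
      ∑ k, s * c k * (Q k).indicator (fun y => g k y ^ (s - 1)) x := by
    intro x
    have key := rpow_sum_le_mul_sum_mul_rpow_sum_filter_le hs1 (hb · x) univ
    rw [mul_sum] at key
    refine key.trans_eq (sum_congr rfl fun k _ => ?_)
    by_cases hx : x ∈ Q k <;> simp [hx, g, mul_assoc]
  have jensen : ∀ k, ∫ x in Q k, g k x ^ (s - 1) ∂μ ≤ μ.real (Q k) *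
      ((μ.real (Q k))⁻¹ * ∑ l with k ≤ l, c l * μ.real (Q l)) ^ (s - 1) := by
    intro k
    have := integral_rpow_le_measureReal_mul_rpow_average ((hg k).restrict (s := Q k)) (hg0 k)
      (by linarith : 0 ≤ s - 1) (by linarith)
    rwa [measureReal_restrict_apply_univ, average_eq, measureReal_restrict_apply_univ,
      setIntegral_sum_mul_indicator_one_of_subset hQ (fun l hl => hQa (mem_filter.mp hl).2) c,
      smul_eq_mul] at this
  calc ∫ x, (∑ k, c k * (Q k).indicator 1 x) ^ s ∂μ
      ≤ ∫ x, ∑ k, s * c k * (Q k).indicator (fun y => g k y ^ (s - 1)) x ∂μ :=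
        integral_mono_of_nonneg
          (ae_of_all _ fun x => Real.rpow_nonneg (sum_nonneg fun k _ => hb k x) s)
          (integrable_finsetSum _ fun k _ => (hgp k).const_mul _) (ae_of_all _ pointwise)
    _ = s * ∑ k, c k * ∫ x in Q k, g k x ^ (s - 1) ∂μ := by
        rw [integral_finsetSum _ fun k _ => (hgp k).const_mul _, mul_sum]
        simp only [integral_const_mul, integral_indicator (hQ _), mul_assoc]
    _ ≤ s * ∑ k, c k * (μ.real (Q k) *
          ((μ.real (Q k))⁻¹ * ∑ l with k ≤ l, c l * μ.real (Q l)) ^ (s - 1)) := by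
        gcongr with k
        · exact hc k
        · exact jensen k
    _ = _ := by simp only [mul_assoc]

end Nested

open MeasureTheory Finset Classical in

theorem wolff_lemma_nested_small_exponent {X : Type*} [MeasurableSpace X]
    (μ : Measure X) [IsFiniteMeasure μ] (s : ℝ) (hs1 : 1 < s) (hs2 : s ≤ 2)
    (N : ℕ) (Q : Fin N → Set X) (hmeas : ∀ k, MeasurableSet (Q k))
    (hnested : ∀ k l : Fin N, k ≤ l → Q l ⊆ Q k)
    (α : Fin N → ℝ) (hα : ∀ k, 0 ≤ α k) (hpos : ∀ k, 0 < (μ (Q k)).toReal) :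
    ∫ x, (∑ k, α k / (μ (Q k)).toReal * (Q k).indicator 1 x) ^ s ∂μ ≤
      s * ∑ k, α k *
        ((1 / (μ (Q k)).toReal) *
          ∑ l ∈ Finset.univ.filter fun l => Q l ⊆ Q k, α l) ^ (s - 1) := by
  have hcα : ∀ k, α k / μ.real (Q k) * μ.real (Q k) = α k := fun k =>
    div_mul_cancel₀ _ (hpos k).ne'
  have hsub : ∀ k, ∑ l with k ≤ l, α l ≤ ∑ l with Q l ⊆ Q k, α l := fun k =>
    sum_le_sum_of_subset_of_nonneg
      (fun l hl => mem_filter.mpr ⟨mem_univ l, hnested k l (mem_filter.mp hl).2⟩) fun l _ _ => hα l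
  calc _ ≤ s * ∑ k, α k / μ.real (Q k) * μ.real (Q k) * ((μ.real (Q k))⁻¹ *
          ∑ l with k ≤ l, α l / μ.real (Q l) * μ.real (Q l)) ^ (s - 1) :=
        Antitone.integral_rpow_sum_mul_indicator_one_le (fun k l => hnested k l) hmeas
          (fun k => div_nonneg (hα k) (hpos k).le) hs1.le hs2
    _ ≤ _ := by
        simp only [hcα, one_div, ← measureReal_def]
        gcongr s * ∑ k, _ * (_ * ?_) ^ (s - 1) with k
        · exact hα k
        · exact mul_nonneg (inv_nonneg.mpr measureReal_nonneg) (sum_nonneg fun l _ => hα l)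
        · exact hsub k
end

section
/- Let σ be a nonnegative measure, s > 1, and let {α_Q}_{Q ∈ D} be nonnegative reals indexed by a finite family D of dyadic cubes contained in a fixed cube Q_0, with only finitely many α_Q nonzero. Define A_2 = ∑_{Q ⊆ Q_0} α_Q ((1/σ(Q)) ∑_{Q' ⊆ Q} α_{Q'})^{s-1} and A_3 = ∫_{Q_0} sup_{x ∈ Q ⊆ Q_0} ((1/σ(Q)) ∑_{Q' ⊆ Q} α_{Q'})^s dσ(x). If additionally A_1 = ∫_{Q_0} (∑_{Q ⊆ Q_0} (α_Q/σ(Q)) 1_Q)^s dσ satisfies A_1 ≤ c A_2 for some constant c, then A_2 ≤ c^{1/(s-1)} A_3. -/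
open MeasureTheory Finset Classical

noncomputable section

def dyadicCube (n : ℕ) (i : ℤ) (k : Fin n → ℤ) : Set (Fin n → ℝ) :=
  {x | ∀ j, (k j : ℝ) * 2 ^ (-i) ≤ x j ∧ x j < ((k j : ℝ) + 1) * 2 ^ (-i)}

def IsDyadicCube (n : ℕ) (Q : Set (Fin n → ℝ)) : Prop :=
  ∃ i k, Q = dyadicCube n i k

/-! Write `f = ∑_Q (α_Q / σ(Q)) 1_Q`, `T_Q = σ(Q)⁻¹ ∑_{Q' ⊆ Q} α_{Q'}` and
`M = sup_{x ∈ Q} T_Q`, so that `A₁ = ∫ f ^ s` and `A₃ = ∫ M ^ s`. Each term of `A₂` is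
`α_Q T_Q ^ (s-1) = ∫_Q (α_Q / σ(Q)) T_Q ^ (s-1)` and `T_Q ≤ M` on `Q`, hence
`A₂ ≤ ∫ f M ^ (s-1) ≤ A₁ ^ (1/s) A₃ ^ (1/s')` by Hölder. Inserting `A₁ ≤ c A₂` and dividing by
`A₂ ^ (1/s)` leaves `A₂ ^ (1/s') ≤ c ^ (1/s) A₃ ^ (1/s')`; raise to the power `s'`, using
`s' / s = 1 / (s - 1)`. -/

theorem IsDyadicCube.measurableSet {n : ℕ} {Q : Set (Fin n → ℝ)} (h : IsDyadicCube n Q) :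
    MeasurableSet Q := by
  obtain ⟨i, k, rfl⟩ := h
  have hpi : dyadicCube n i k =
      Set.univ.pi fun j => Set.Ico ((k j : ℝ) * 2 ^ (-i)) (((k j : ℝ) + 1) * 2 ^ (-i)) := by
    ext x
    simp [dyadicCube, Set.mem_pi, Set.mem_Ico]
  rw [hpi]
  exact MeasurableSet.univ_pi fun j => measurableSet_Ico

theorem le_rpow_mul_of_le_rpow_mul_rpow {p q a b c d : ℝ} (hpq : p.HolderConjugate q)
    (ha : 0 ≤ a) (hb : 0 ≤ b) (hc : 0 ≤ c) (hd : 0 ≤ d)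
    (hholder : a ≤ b ^ (1 / p) * d ^ (1 / q)) (hba : b ≤ c * a) :
    a ≤ c ^ (q / p) * d := by
  rcases ha.eq_or_lt with rfl | ha
  · positivity
  have hp := hpq.pos
  have hq := hpq.symm.pos
  have hsplit : a ^ (1 / p) * a ^ (1 / q) = a := by
    rw [← Real.rpow_add ha, one_div, one_div, hpq.inv_add_inv_eq_one, Real.rpow_one]
  have hroot : a ^ (1 / q) ≤ c ^ (1 / p) * d ^ (1 / q) := by
    refine le_of_mul_le_mul_left ?_ (Real.rpow_pos_of_pos ha (1 / p))
    calc a ^ (1 / p) * a ^ (1 / q) = a := hsplit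
      _ ≤ (c * a) ^ (1 / p) * d ^ (1 / q) := hholder.trans (by gcongr)
      _ = a ^ (1 / p) * (c ^ (1 / p) * d ^ (1 / q)) := by
        rw [Real.mul_rpow hc ha.le]; ring
  calc a = (a ^ (1 / q)) ^ q := by
        rw [← Real.rpow_mul ha.le, one_div_mul_cancel hq.ne', Real.rpow_one]
    _ ≤ (c ^ (1 / p) * d ^ (1 / q)) ^ q := by gcongr
    _ = c ^ (q / p) * d := by
      rw [Real.mul_rpow (by positivity) (by positivity), ← Real.rpow_mul hc, ← Real.rpow_mul hd,
        one_div_mul_cancel hq.ne', Real.rpow_one, one_div_mul_eq_div]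

theorem MeasureTheory.MemLp.rpow_of_nonneg {X : Type*} [MeasurableSpace X] {μ : Measure X}
    {f : X → ℝ} {p r : ℝ} (hf : MemLp f (ENNReal.ofReal p) μ) (hf0 : ∀ x, 0 ≤ f x) (hr : 0 < r) :
    MemLp (fun x => f x ^ r) (ENNReal.ofReal (p / r)) μ := by
  have h := hf.norm_rpow_div (ENNReal.ofReal r)
  rw [ENNReal.toReal_ofReal hr.le, ← ENNReal.ofReal_div_of_pos hr] at h
  simpa only [Real.norm_of_nonneg (hf0 _)] using h

section IndicatorSums

variable {X : Type*} {ι : Type*} {Q : ι → Set X}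

def normalizedIndicatorSum [MeasurableSpace X] [Fintype ι] (μ : Measure X) (Q : ι → Set X)
    (α : ι → ℝ) (x : X) : ℝ :=
  ∑ i, α i / (μ (Q i)).toReal * (Q i).indicator 1 x

def indicatorSup (Q : ι → Set X) (T : ι → ℝ) (x : X) : ℝ :=
  ⨆ i, (Q i).indicator (fun _ => T i) x

theorem normalizedIndicatorSum_nonneg [MeasurableSpace X] [Fintype ι] {μ : Measure X}
    {α : ι → ℝ} (hα : ∀ i, 0 ≤ α i) (x : X) :
    0 ≤ normalizedIndicatorSum μ Q α x :=
  sum_nonneg fun i _ => mul_nonneg (div_nonneg (hα i) ENNReal.toReal_nonneg)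
    (Set.indicator_nonneg (fun _ _ => zero_le_one) x)

theorem memLp_normalizedIndicatorSum [MeasurableSpace X] [Fintype ι] {μ : Measure X}
    (hQ : ∀ i, MeasurableSet (Q i)) (hfin : ∀ i, μ (Q i) ≠ ⊤) (α : ι → ℝ) (p : ENNReal) :
    MemLp (normalizedIndicatorSum μ Q α) p μ :=
  memLp_finsetSum _ fun i _ =>
    (memLp_indicator_const p (hQ i) 1 (Or.inr (hfin i))).const_mul _

theorem indicatorSup_nonneg {T : ι → ℝ} (hT : ∀ i, 0 ≤ T i) (x : X) : 0 ≤ indicatorSup Q T x :=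
  Real.iSup_nonneg fun i => Set.indicator_nonneg (fun _ _ => hT i) x

theorem le_indicatorSup [Finite ι] (T : ι → ℝ) {x : X} {i : ι} (hx : x ∈ Q i) :
    T i ≤ indicatorSup Q T x := by
  have h := le_ciSup (Set.finite_range fun i => (Q i).indicator (fun _ => T i) x).bddAbove i
  rwa [Set.indicator_of_mem hx] at h

theorem indicatorSup_le_sum [Fintype ι] {T : ι → ℝ} (hT : ∀ i, 0 ≤ T i) (x : X) :
    indicatorSup Q T x ≤ ∑ i, (Q i).indicator (fun _ => T i) x :=
  Real.iSup_le
    (fun i => single_le_sum (fun j _ => Set.indicator_nonneg (fun _ _ => hT j) x) (mem_univ i))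
    (sum_nonneg fun j _ => Set.indicator_nonneg (fun _ _ => hT j) x)

theorem measurable_indicatorSup [MeasurableSpace X] [Countable ι]
    (hQ : ∀ i, MeasurableSet (Q i)) (T : ι → ℝ) :
    Measurable (indicatorSup Q T) :=
  Measurable.iSup fun i => measurable_const.indicator (hQ i)

theorem memLp_indicatorSup [MeasurableSpace X] [Fintype ι] {μ : Measure X}
    (hQ : ∀ i, MeasurableSet (Q i)) (hfin : ∀ i, μ (Q i) ≠ ⊤) {T : ι → ℝ} (hT : ∀ i, 0 ≤ T i)
    (p : ENNReal) : MemLp (indicatorSup Q T) p μ := by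
  have hsum : MemLp (fun x => ∑ i, (Q i).indicator (fun _ => T i) x) p μ :=
    memLp_finsetSum univ fun i _ => memLp_indicator_const p (hQ i) (T i) (Or.inr (hfin i))
  refine hsum.of_le (measurable_indicatorSup hQ T).aestronglyMeasurable
    (Filter.Eventually.of_forall fun x => ?_)
  rw [Real.norm_of_nonneg (indicatorSup_nonneg hT x),
    Real.norm_of_nonneg (sum_nonneg fun j _ => Set.indicator_nonneg (fun _ _ => hT j) x)]
  exact indicatorSup_le_sum hT x

theorem sum_indicator_le_normalizedIndicatorSum_mul_rpow [MeasurableSpace X] [Fintype ι]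
    {μ : Measure X} {α T : ι → ℝ} (hα : ∀ i, 0 ≤ α i) (hT : ∀ i, 0 ≤ T i) {r : ℝ} (hr : 0 ≤ r)
    (x : X) :
    ∑ i, (Q i).indicator (fun _ => α i / (μ (Q i)).toReal * T i ^ r) x ≤
      normalizedIndicatorSum μ Q α x * indicatorSup Q T x ^ r := by
  rw [normalizedIndicatorSum, sum_mul]
  gcongr with i
  by_cases hx : x ∈ Q i
  · simp only [Set.indicator_of_mem hx, Pi.one_apply, mul_one]
    exact mul_le_mul_of_nonneg_left (Real.rpow_le_rpow (hT i) (le_indicatorSup T hx) hr)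
      (div_nonneg (hα i) ENNReal.toReal_nonneg)
  · simp [Set.indicator_of_notMem hx]

theorem sum_mul_rpow_le_integral [MeasurableSpace X] [Fintype ι] {μ : Measure X} {S : Set X}
    (hQ : ∀ i, MeasurableSet (Q i)) (hsub : ∀ i, Q i ⊆ S) (hpos : ∀ i, 0 < (μ (Q i)).toReal)
    {α T : ι → ℝ} (hα : ∀ i, 0 ≤ α i) (hT : ∀ i, 0 ≤ T i) {r : ℝ} (hr : 0 ≤ r)
    (hint : Integrable (fun x => normalizedIndicatorSum μ Q α x * indicatorSup Q T x ^ r)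
      (μ.restrict S)) :
    ∑ i, α i * T i ^ r ≤ ∫ x in S, normalizedIndicatorSum μ Q α x * indicatorSup Q T x ^ r ∂μ := by
  set g : ι → X → ℝ := fun i => (Q i).indicator fun _ => α i / (μ (Q i)).toReal * T i ^ r
  have hg : ∀ i, Integrable (g i) (μ.restrict S) := fun i =>
    (integrable_indicator_iff (hQ i)).2 <| integrableOn_const <|
      ((Measure.restrict_apply_le _ _).trans_lt (ENNReal.toReal_pos_iff.1 (hpos i)).2).ne
  have hmass : ∀ i, α i * T i ^ r = ∫ x in S, g i x ∂μ := fun i => by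
    rw [integral_indicator_const _ (hQ i), measureReal_restrict_apply (hQ i),
      Set.inter_eq_self_of_subset_left (hsub i), measureReal_def, smul_eq_mul]
    field_simp [(hpos i).ne']
  calc ∑ i, α i * T i ^ r = ∑ i, ∫ x in S, g i x ∂μ := sum_congr rfl fun i _ => hmass i
    _ = ∫ x in S, ∑ i, g i x ∂μ := (integral_finsetSum _ fun i _ => hg i).symm
    _ ≤ _ := integral_mono (integrable_finsetSum _ fun i _ => hg i) hint
      (sum_indicator_le_normalizedIndicatorSum_mul_rpow hα hT hr)

end IndicatorSums

theorem wolff_lemma_A2_le_A3_general (n : ℕ) (σ : Measure (Fin n → ℝ))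
    (s : ℝ) (hs : 1 < s) {ι : Type*} [Fintype ι]
    (Q : ι → Set (Fin n → ℝ)) (Q₀ : Set (Fin n → ℝ))
    (hQ : ∀ i, IsDyadicCube n (Q i))
    (hsub : ∀ i, Q i ⊆ Q₀) (hpos : ∀ i, 0 < (σ (Q i)).toReal)
    (α : ι → ℝ) (hα : ∀ i, 0 ≤ α i) (c : ℝ) (hc : 0 ≤ c)
    (hA12 : ∫ x in Q₀, (∑ i, α i / (σ (Q i)).toReal * (Q i).indicator 1 x) ^ s ∂σ ≤
      c * ∑ i, α i * ((1 / (σ (Q i)).toReal) *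
        ∑ j ∈ Finset.univ.filter fun j => Q j ⊆ Q i, α j) ^ (s - 1)) :
    ∑ i, α i * ((1 / (σ (Q i)).toReal) *
        ∑ j ∈ Finset.univ.filter fun j => Q j ⊆ Q i, α j) ^ (s - 1) ≤
      c ^ (1 / (s - 1)) *
        ∫ x in Q₀, (⨆ i, (Q i).indicator
          (fun _ => (1 / (σ (Q i)).toReal) *
            ∑ j ∈ Finset.univ.filter fun j => Q j ⊆ Q i, α j) x) ^ s ∂σ := by
  have hQm : ∀ i, MeasurableSet (Q i) := fun i => (hQ i).measurableSet
  have hfin : ∀ i, σ (Q i) ≠ ⊤ := fun i => (ENNReal.toReal_pos_iff.1 (hpos i)).2.ne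
  set T : ι → ℝ := fun i =>
    (1 / (σ (Q i)).toReal) * ∑ j ∈ Finset.univ.filter fun j => Q j ⊆ Q i, α j
  have hT : ∀ i, 0 ≤ T i := fun i => mul_nonneg (by positivity) (sum_nonneg fun j _ => hα j)
  have hpq : s.HolderConjugate (s / (s - 1)) := .conjExponent hs
  have hf : MemLp (normalizedIndicatorSum σ Q α) (ENNReal.ofReal s) (σ.restrict Q₀) :=
    (memLp_normalizedIndicatorSum hQm hfin α _).restrict Q₀
  have hg : MemLp (fun x => indicatorSup Q T x ^ (s - 1)) (ENNReal.ofReal (s / (s - 1)))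
      (σ.restrict Q₀) :=
    ((memLp_indicatorSup hQm hfin hT (.ofReal s)).restrict Q₀).rpow_of_nonneg
      (indicatorSup_nonneg hT) (sub_pos.2 hs)
  have hA2_le : ∑ i, α i * T i ^ (s - 1) ≤
      ∫ x in Q₀, normalizedIndicatorSum σ Q α x * indicatorSup Q T x ^ (s - 1) ∂σ :=
    haveI := hpq.ennrealOfReal
    sum_mul_rpow_le_integral hQm hsub hpos hα hT (sub_pos.2 hs).le (hf.integrable_mul hg)
  have hholder := integral_mul_le_Lp_mul_Lq_of_nonneg hpq
    (ae_of_all _ (normalizedIndicatorSum_nonneg hα))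
    (ae_of_all _ fun x => Real.rpow_nonneg (indicatorSup_nonneg hT x) _) hf hg
  simp only [← Real.rpow_mul (indicatorSup_nonneg hT _), hpq.sub_one_mul_conj] at hholder
  have hexp : s / (s - 1) / s = 1 / (s - 1) := by field_simp
  rw [← hexp]
  exact le_rpow_mul_of_le_rpow_mul_rpow hpq
    (sum_nonneg fun i _ => mul_nonneg (hα i) (Real.rpow_nonneg (hT i) _))
    (integral_nonneg fun x => Real.rpow_nonneg (normalizedIndicatorSum_nonneg hα x) _) hc
    (integral_nonneg fun x => Real.rpow_nonneg (indicatorSup_nonneg hT x) _)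
    (hA2_le.trans hholder) hA12

theorem wolff_lemma_A2_le_A3 (n : ℕ) (σ : Measure (Fin n → ℝ))
    (s : ℝ) (hs : 1 < s) {ι : Type*} [Fintype ι]
    (Q : ι → Set (Fin n → ℝ)) (Q₀ : Set (Fin n → ℝ))
    (hQ₀ : IsDyadicCube n Q₀) (hQ : ∀ i, IsDyadicCube n (Q i))
    (hsub : ∀ i, Q i ⊆ Q₀) (hpos : ∀ i, 0 < (σ (Q i)).toReal)
    (α : ι → ℝ) (hα : ∀ i, 0 ≤ α i) (c : ℝ) (hc : 0 ≤ c)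
    (hA12 : ∫ x in Q₀, (∑ i, α i / (σ (Q i)).toReal * (Q i).indicator 1 x) ^ s ∂σ ≤
      c * ∑ i, α i * ((1 / (σ (Q i)).toReal) *
        ∑ j ∈ Finset.univ.filter fun j => Q j ⊆ Q i, α j) ^ (s - 1)) :
    ∑ i, α i * ((1 / (σ (Q i)).toReal) *
        ∑ j ∈ Finset.univ.filter fun j => Q j ⊆ Q i, α j) ^ (s - 1) ≤
      c ^ (1 / (s - 1)) *
        ∫ x in Q₀, (⨆ i, (Q i).indicator
          (fun _ => (1 / (σ (Q i)).toReal) *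
            ∑ j ∈ Finset.univ.filter fun j => Q j ⊆ Q i, α j) x) ^ s ∂σ :=
  wolff_lemma_A2_le_A3_general n σ s hs Q Q₀ hQ hsub hpos α hα c hc hA12

end
end

section
/- Let 1 < q ≤ 2 and let ω, σ be finite measures, K : D → [0,∞) supported on finitely many dyadic cubes contained in Q_0, with ω(Q) > 0 whenever K(Q) > 0. Then ∫_{Q_0} (∑_{Q ⊆ Q_0} K(Q) σ(Q) 1_Q)^q dω ≤ q ∫_{Q_0} ∑_{Q ⊆ Q_0} K(Q) ω(Q) ((∫_Q K̄_ω(Q) dσ))^{q-1} 1_Q dσ, where K̄_ω(Q)(x) = (1/ω(Q)) ∑_{Q' ⊆ Q} K(Q') ω(Q') 1_{Q'}(x). -/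
open MeasureTheory Finset Classical

noncomputable section

/-! At each point `x` the cubes containing `x` form a chain. Peeling off the largest one and using
the tangent-line bound `(A + B) ^ q ≤ A ^ q + q B (A + B) ^ (q - 1)` for the convex `t ↦ t ^ q`
gives, pointwise, `f ^ q ≤ q ∑_Q a_Q 1_Q g_Q ^ (q - 1)`, where `f = ∑_Q a_Q 1_Q` with
`a_Q = K(Q) σ(Q)` and `g_Q` is the part of `f` coming from the cubes inside `Q`. Integrating
against `ω` and applying Jensen's inequality on each `Q` to `t ↦ t ^ (q - 1)`, concave as
`q - 1 ≤ 1`, bounds `∫_Q g_Q ^ (q - 1) dω` by `ω(Q)` times the `(q - 1)`-th power of the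
`ω`-average of `g_Q`, which is `∫_Q K̄_ω(Q) dσ`. -/

lemma mem_dyadicCube_iff {n : ℕ} {i : ℤ} {k : Fin n → ℤ} {x : Fin n → ℝ} :
    x ∈ dyadicCube n i k ↔ ∀ j, ⌊x j * 2 ^ i⌋ = k j := by
  have h : (0 : ℝ) < 2 ^ i := by positivity
  simp only [dyadicCube, Set.mem_ofPred_eq, Int.floor_eq_iff, zpow_neg, ← div_eq_mul_inv,
    div_le_iff₀ h, lt_div_iff₀ h]

lemma measurableSet_dyadicCube (n : ℕ) (i : ℤ) (k : Fin n → ℤ) :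
    MeasurableSet (dyadicCube n i k) := by
  simp only [dyadicCube, Set.ofPred_forall, Set.ofPred_and]
  exact .iInter fun j => (measurableSet_le (by fun_prop) (by fun_prop)).inter
    (measurableSet_lt (by fun_prop) (by fun_prop))

lemma floor_mul_two_zpow_eq_of_le {t u : ℝ} {i i' : ℤ} (h : i' ≤ i)
    (htu : ⌊t * 2 ^ i⌋ = ⌊u * 2 ^ i⌋) : ⌊t * 2 ^ i'⌋ = ⌊u * 2 ^ i'⌋ := by
  obtain ⟨m, rfl⟩ := Int.le.dest h
  have hdiv (s : ℝ) : s * 2 ^ i' = s * 2 ^ (i' + m) / (2 ^ m : ℕ) := by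
    rw [zpow_add₀ two_ne_zero, zpow_natCast]; push_cast; field_simp
  rw [hdiv t, hdiv u, Int.floor_div_natCast, Int.floor_div_natCast, htu]

lemma dyadicCube_subset_of_le {n : ℕ} {i i' : ℤ} {k k' : Fin n → ℤ} {x : Fin n → ℝ} (h : i' ≤ i)
    (hx : x ∈ dyadicCube n i k) (hx' : x ∈ dyadicCube n i' k') :
    dyadicCube n i k ⊆ dyadicCube n i' k' := by
  intro y hy
  rw [mem_dyadicCube_iff] at hx hx' hy ⊢
  intro j
  rw [← hx' j]
  exact floor_mul_two_zpow_eq_of_le h ((hy j).trans (hx j).symm)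

lemma dyadicCube_subset_or_subset {n : ℕ} {i i' : ℤ} {k k' : Fin n → ℤ} {x : Fin n → ℝ}
    (hx : x ∈ dyadicCube n i k) (hx' : x ∈ dyadicCube n i' k') :
    dyadicCube n i k ⊆ dyadicCube n i' k' ∨ dyadicCube n i' k' ⊆ dyadicCube n i k :=
  (le_total i' i).imp (dyadicCube_subset_of_le · hx hx') (dyadicCube_subset_of_le · hx' hx)

lemma add_rpow_le_rpow_add_mul_add_rpow_sub_one {A B q : ℝ} (hA : 0 ≤ A) (hB : 0 ≤ B)
    (hq : 1 ≤ q) : (A + B) ^ q ≤ A ^ q + q * B * (A + B) ^ (q - 1) := by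
  rcases (add_nonneg hA hB).eq_or_lt with h | h
  · obtain ⟨rfl, rfl⟩ : A = 0 ∧ B = 0 := ⟨by linarith, by linarith⟩
    simp [Real.zero_rpow (by linarith : q ≠ 0)]
  have key := one_add_mul_self_le_rpow_one_add (s := -B / (A + B)) (by
    rw [neg_div, neg_le_neg_iff, div_le_one h]; linarith) hq
  rw [show 1 + -B / (A + B) = A / (A + B) by field_simp; ring, Real.div_rpow hA h.le,
    le_div_iff₀ (by positivity)] at key
  rw [Real.rpow_sub_one h.ne']
  field_simp at key ⊢
  linarith

lemma rpow_sum_le_mul_sum_mul_rpow_sum_le {ι β : Type*} [Preorder β] (Q : ι → β) {q : ℝ}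
    (hq : 1 ≤ q) {a : ι → ℝ} (ha : ∀ t, 0 ≤ a t) (T : Finset ι)
    (hT : ∀ s ∈ T, ∀ t ∈ T, Q s ≤ Q t ∨ Q t ≤ Q s) :
    (∑ t ∈ T, a t) ^ q ≤ q * ∑ t ∈ T, a t * (∑ s ∈ T with Q s ≤ Q t, a s) ^ (q - 1) := by
  induction T using Finset.strongInduction with
  | H T ih =>
  rcases T.eq_empty_or_nonempty with rfl | hne
  · simp [Real.zero_rpow (by linarith : q ≠ 0)]
  obtain ⟨t₀, ht₀, hmax⟩ := T.exists_maximalFor Q hne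
  have hle : ∀ s ∈ T, Q s ≤ Q t₀ := fun s hs => (hT s hs t₀ ht₀).elim id (hmax hs)
  have ih' := ih (T.erase t₀) (erase_ssubset ht₀) fun s hs t ht =>
    hT s (mem_of_mem_erase hs) t (mem_of_mem_erase ht)
  have hsum := sum_erase_add T a ht₀
  calc (∑ t ∈ T, a t) ^ q
      ≤ (∑ t ∈ T.erase t₀, a t) ^ q + q * a t₀ * (∑ t ∈ T, a t) ^ (q - 1) := by
        rw [← hsum]
        exact add_rpow_le_rpow_add_mul_add_rpow_sub_one (sum_nonneg fun t _ => ha t) (ha t₀) hq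
    _ ≤ q * ∑ t ∈ T.erase t₀, a t * (∑ s ∈ T.erase t₀ with Q s ≤ Q t, a s) ^ (q - 1)
          + q * a t₀ * (∑ t ∈ T, a t) ^ (q - 1) := by gcongr
    _ ≤ q * ∑ t ∈ T.erase t₀, a t * (∑ s ∈ T with Q s ≤ Q t, a s) ^ (q - 1)
          + q * a t₀ * (∑ t ∈ T, a t) ^ (q - 1) := by
        gcongr with t
        · exact ha t
        · exact sum_nonneg fun s _ => ha s
        · exact fun s _ _ => ha s
        · exact erase_subset t₀ T
    _ = q * ∑ t ∈ T, a t * (∑ s ∈ T with Q s ≤ Q t, a s) ^ (q - 1) := by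
        conv_rhs => rw [← sum_erase_add T _ ht₀, filter_true_of_mem hle]
        ring

lemma rpow_sum_mul_indicator_le {α ι : Type*} (Q : ι → Set α) {q : ℝ} (hq : 1 ≤ q) {a : ι → ℝ}
    (ha : ∀ p, 0 ≤ a p) (S : Finset ι) (x : α)
    (hnested : ∀ s ∈ S, ∀ t ∈ S, x ∈ Q s → x ∈ Q t → Q s ⊆ Q t ∨ Q t ⊆ Q s) :
    (∑ p ∈ S, a p * (Q p).indicator 1 x) ^ q ≤
      q * ∑ p ∈ S, a p * (Q p).indicator
        (fun y => (∑ p' ∈ S with Q p' ⊆ Q p, a p' * (Q p').indicator 1 y) ^ (q - 1)) x := by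
  have hrestrict (S' : Finset ι) (f : ι → α → ℝ) :
      ∑ p ∈ S', a p * (Q p).indicator (f p) x = ∑ p ∈ S' with x ∈ Q p, a p * f p x := by
    rw [sum_filter]
    refine sum_congr rfl fun p _ => ?_
    by_cases hp : x ∈ Q p <;> simp [hp]
  simp only [hrestrict, Pi.one_apply, mul_one, filter_comm (fun p' => Q p' ⊆ _)]
  refine rpow_sum_le_mul_sum_mul_rpow_sum_le Q hq ha _ fun s hs t ht => ?_
  rw [mem_filter] at hs ht
  exact hnested s hs.1 t ht.1 hs.2 ht.2

lemma sum_mul_indicator_one_nonneg {α ι : Type*} {Q : ι → Set α} {a : ι → ℝ}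
    (ha : ∀ p, 0 ≤ a p) (S : Finset ι) (x : α) : 0 ≤ ∑ p ∈ S, a p * (Q p).indicator 1 x :=
  sum_nonneg fun p _ => mul_nonneg (ha p) (Set.indicator_nonneg (fun _ _ => zero_le_one) x)

section
variable {α ι : Type*} [MeasurableSpace α] {μ : Measure α} [IsFiniteMeasure μ]

lemma MeasureTheory.Integrable.rpow_const_of_le_one_s14 {g : α → ℝ} (hg : Integrable g μ)
    (hg0 : ∀ x, 0 ≤ g x) {r : ℝ} (hr0 : 0 ≤ r) (hr1 : r ≤ 1) :
    Integrable (fun x => g x ^ r) μ := by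
  have := integrable_norm_rpow_of_le hg.1 hr0 zero_le_one hr1 (by simpa using hg.norm)
  simpa [Real.norm_of_nonneg (hg0 _)] using this

lemma setIntegral_rpow_le_measureReal_mul_rpow_setAverage {s : Set α} {g : α → ℝ}
    (hg : IntegrableOn g s μ) (hg0 : ∀ x, 0 ≤ g x) {r : ℝ} (hr0 : 0 ≤ r) (hr1 : r ≤ 1) :
    ∫ x in s, g x ^ r ∂μ ≤ μ.real s * (⨍ x in s, g x ∂μ) ^ r := by
  rw [← measure_smul_setAverage _ (measure_ne_top μ s), smul_eq_mul]
  rcases eq_or_ne (μ s) 0 with hs | hs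
  · simp [measureReal_def, hs]
  gcongr
  exact (Real.concaveOn_rpow hr0 hr1).le_map_set_average
    (Real.continuous_rpow_const hr0).continuousOn isClosed_Ici hs (measure_ne_top μ s)
    (ae_of_all _ hg0) hg (hg.rpow_const_of_le_one_s14 hg0 hr0 hr1)

variable {Q : ι → Set α}

lemma integrable_sum_mul_indicator_one (hQ : ∀ p, MeasurableSet (Q p)) (S : Finset ι)
    (c : ι → ℝ) : Integrable (fun x => ∑ p ∈ S, c p * (Q p).indicator 1 x) μ :=
  integrable_finsetSum _ fun p _ => ((integrable_const 1).indicator (hQ p)).const_mul (c p)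

lemma setIntegral_sum_mul_indicator_one (hQ : ∀ p, MeasurableSet (Q p)) {S : Finset ι}
    {s : Set α} (hQs : ∀ p ∈ S, Q p ⊆ s) (c : ι → ℝ) :
    ∫ x in s, ∑ p ∈ S, c p * (Q p).indicator 1 x ∂μ = ∑ p ∈ S, c p * μ.real (Q p) := by
  rw [integral_finsetSum]
  · refine sum_congr rfl fun p hp => ?_
    rw [integral_const_mul, integral_indicator_one (hQ p), measureReal_restrict_apply (hQ p),
      Set.inter_eq_left.2 (hQs p hp)]
  · exact fun p _ => ((integrable_const 1).indicator (hQ p)).const_mul (c p)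

theorem setIntegral_rpow_sum_mul_indicator_le (hQ : ∀ p, MeasurableSet (Q p)) {S : Finset ι}
    (hnested : ∀ x, ∀ s ∈ S, ∀ t ∈ S, x ∈ Q s → x ∈ Q t → Q s ⊆ Q t ∨ Q t ⊆ Q s) {s : Set α}
    (hQs : ∀ p ∈ S, Q p ⊆ s) {q : ℝ} (hq1 : 1 ≤ q) (hq2 : q ≤ 2) {a : ι → ℝ}
    (ha : ∀ p, 0 ≤ a p) :
    ∫ x in s, (∑ p ∈ S, a p * (Q p).indicator 1 x) ^ q ∂μ ≤
      q * ∑ p ∈ S, a p * μ.real (Q p) *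
        ((μ.real (Q p))⁻¹ * ∑ p' ∈ S with Q p' ⊆ Q p, a p' * μ.real (Q p')) ^ (q - 1) := by
  set g : ι → α → ℝ := fun p y => ∑ p' ∈ S with Q p' ⊆ Q p, a p' * (Q p').indicator 1 y
  have hg0 (p : ι) (y : α) : 0 ≤ g p y := sum_mul_indicator_one_nonneg ha _ y
  have hterm (p : ι) :
      Integrable (fun x => a p * (Q p).indicator (fun y => g p y ^ (q - 1)) x) (μ.restrict s) :=
    (((integrable_sum_mul_indicator_one hQ _ a).rpow_const_of_le_one_s14 (hg0 p) (by linarith)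
      (by linarith)).indicator (hQ p)).const_mul (a p)
  have havg (p : ι) : ⨍ y in Q p, g p y ∂μ =
      (μ.real (Q p))⁻¹ * ∑ p' ∈ S with Q p' ⊆ Q p, a p' * μ.real (Q p') := by
    rw [setAverage_eq, setIntegral_sum_mul_indicator_one hQ (fun p' hp' => (mem_filter.1 hp').2),
      smul_eq_mul]
  calc ∫ x in s, (∑ p ∈ S, a p * (Q p).indicator 1 x) ^ q ∂μ
      ≤ ∫ x in s, q * ∑ p ∈ S, a p * (Q p).indicator (fun y => g p y ^ (q - 1)) x ∂μ :=
        integral_mono_of_nonneg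
          (ae_of_all _ fun x => Real.rpow_nonneg (sum_mul_indicator_one_nonneg ha S x) q)
          ((integrable_finsetSum _ fun p _ => hterm p).const_mul q)
          (ae_of_all _ fun x => rpow_sum_mul_indicator_le Q hq1 ha S x (hnested x))
    _ = q * ∑ p ∈ S, a p * ∫ y in Q p, g p y ^ (q - 1) ∂μ := by
        rw [integral_const_mul, integral_finsetSum _ fun p _ => hterm p]
        congr 1
        refine sum_congr rfl fun p hp => ?_
        rw [integral_const_mul, setIntegral_indicator (hQ p), Set.inter_eq_right.2 (hQs p hp)]
    _ ≤ q * ∑ p ∈ S, a p * (μ.real (Q p) * (⨍ y in Q p, g p y ∂μ) ^ (q - 1)) := by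
        gcongr with p
        · exact ha p
        · exact setIntegral_rpow_le_measureReal_mul_rpow_setAverage
            (integrable_sum_mul_indicator_one hQ _ a) (hg0 p) (by linarith) (by linarith)
    _ = _ := by simp only [havg, mul_assoc]

end

theorem A1_le_A2_integral_form_general (n : ℕ) (σ ω : Measure (Fin n → ℝ))
    [IsFiniteMeasure σ] [IsFiniteMeasure ω] (q : ℝ) (hq1 : 1 < q) (hq2 : q ≤ 2)
    (Q₀ : Set (Fin n → ℝ))
    (S : Finset (ℤ × (Fin n → ℤ))) (hS : ∀ p ∈ S, dyadicCube n p.1 p.2 ⊆ Q₀)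
    (K : ℤ × (Fin n → ℤ) → ℝ) (hK : ∀ p, 0 ≤ K p) :
    ∫ x in Q₀, (∑ p ∈ S, K p * (σ (dyadicCube n p.1 p.2)).toReal *
        (dyadicCube n p.1 p.2).indicator 1 x) ^ q ∂ω ≤
      q * ∫ x in Q₀, (∑ p ∈ S, K p * (ω (dyadicCube n p.1 p.2)).toReal *
        ((1 / (ω (dyadicCube n p.1 p.2)).toReal) *
          ∑ p' ∈ S.filter fun p' => dyadicCube n p'.1 p'.2 ⊆ dyadicCube n p.1 p.2,
            K p' * (ω (dyadicCube n p'.1 p'.2)).toReal *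
              (σ (dyadicCube n p'.1 p'.2)).toReal) ^ (q - 1) *
        (dyadicCube n p.1 p.2).indicator 1 x) ∂σ := by
  set Q : ℤ × (Fin n → ℤ) → Set (Fin n → ℝ) := fun p => dyadicCube n p.1 p.2
  have hQ (p : ℤ × (Fin n → ℤ)) : MeasurableSet (Q p) := measurableSet_dyadicCube n p.1 p.2
  have hnested (x : Fin n → ℝ) : ∀ s ∈ S, ∀ t ∈ S, x ∈ Q s → x ∈ Q t → Q s ⊆ Q t ∨ Q t ⊆ Q s :=
    fun _ _ _ _ => dyadicCube_subset_or_subset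
  rw [setIntegral_sum_mul_indicator_one hQ hS]
  calc ∫ x in Q₀, (∑ p ∈ S, K p * σ.real (Q p) * (Q p).indicator 1 x) ^ q ∂ω
      ≤ q * ∑ p ∈ S, K p * σ.real (Q p) * ω.real (Q p) * ((ω.real (Q p))⁻¹ *
          ∑ p' ∈ S with Q p' ⊆ Q p, K p' * σ.real (Q p') * ω.real (Q p')) ^ (q - 1) :=
        setIntegral_rpow_sum_mul_indicator_le hQ hnested hS hq1.le hq2
          fun p => mul_nonneg (hK p) measureReal_nonneg
    _ = _ := by simp only [one_div, mul_right_comm _ (σ.real _)]; rfl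

theorem A1_le_A2_integral_form (n : ℕ) (σ ω : Measure (Fin n → ℝ))
    [IsFiniteMeasure σ] [IsFiniteMeasure ω] (q : ℝ) (hq1 : 1 < q) (hq2 : q ≤ 2)
    (Q₀ : Set (Fin n → ℝ)) (hQ₀ : IsDyadicCube n Q₀)
    (S : Finset (ℤ × (Fin n → ℤ))) (hS : ∀ p ∈ S, dyadicCube n p.1 p.2 ⊆ Q₀)
    (K : ℤ × (Fin n → ℤ) → ℝ) (hK : ∀ p, 0 ≤ K p)
    (hω : ∀ p ∈ S, K p ≠ 0 → 0 < (ω (dyadicCube n p.1 p.2)).toReal) :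
    ∫ x in Q₀, (∑ p ∈ S, K p * (σ (dyadicCube n p.1 p.2)).toReal *
        (dyadicCube n p.1 p.2).indicator 1 x) ^ q ∂ω ≤
      q * ∫ x in Q₀, (∑ p ∈ S, K p * (ω (dyadicCube n p.1 p.2)).toReal *
        ((1 / (ω (dyadicCube n p.1 p.2)).toReal) *
          ∑ p' ∈ S.filter fun p' => dyadicCube n p'.1 p'.2 ⊆ dyadicCube n p.1 p.2,
            K p' * (ω (dyadicCube n p'.1 p'.2)).toReal *
              (σ (dyadicCube n p'.1 p'.2)).toReal) ^ (q - 1) *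
        (dyadicCube n p.1 p.2).indicator 1 x) ∂σ :=
  A1_le_A2_integral_form_general n σ ω q hq1 hq2 Q₀ S hS K hK
end
end
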